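/- arXiv:2205.14284 — 5 statements merged into one kernel-verified Lean document; each statement's English description precedes it below -/
import Mathlib

section
/- Fix λ ∈ ℝ^{d−1}, a matrix X̃ : n×(d−1), y ∈ ℝⁿ, a matrix X : n×d, and k ∈ [0,n]. The set D = { w ⋆ (X̃λ − y) : w ∈ [0,1]ⁿ, ‖w‖₁ ≥ n−k } is convex, and D ∩ ker(Xᵀ) ≠ ∅ if and only if for every u ∈ ℝᵈ there exists w ∈ [0,1]ⁿ with ‖w‖₁ ≥ n−k and Σᵢ₌₁ⁿ wᵢ(⟨X̃ᵢ,λ⟩ − yᵢ)⟨Xᵢ,u⟩ ≥ 0. -/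
open Finset

private lemma range_of_ortho_ker (n d : ℕ) (X : Matrix (Fin n) (Fin d) ℝ) (c : Fin n → ℝ)
    (hc : ∀ v : Fin n → ℝ, X.transpose.mulVec v = 0 → ∑ i, v i * c i = 0) :
    ∃ u : Fin d → ℝ, c = X.mulVec u := by
  classical
  let e : (Fin n → ℝ) ≃ₗ[ℝ] EuclideanSpace ℝ (Fin n) :=
    (WithLp.linearEquiv 2 ℝ (Fin n → ℝ)).symm
  let L : (Fin d → ℝ) →ₗ[ℝ] EuclideanSpace ℝ (Fin n) := e.toLinearMap ∘ₗ X.mulVecLin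
  let S : Submodule ℝ (EuclideanSpace ℝ (Fin n)) := LinearMap.range L
  have hSS : Sᗮᗮ = S := Submodule.orthogonal_orthogonal S
  have hmem : e c ∈ Sᗮᗮ := by
    rw [Submodule.mem_orthogonal]
    intro r hr
    have hr' : ∀ u : Fin d → ℝ, ∑ i, X.mulVec u i * r i = 0 := by
      intro u
      have := (Submodule.mem_orthogonal' S r).mp hr (L u) ⟨u, rfl⟩
      simpa [L, e, PiLp.inner_apply, RCLike.inner_apply, mul_comm] using this
    have hker : X.transpose.mulVec (e.symm r) = 0 := by
      funext j
      have := hr' (Pi.single j 1)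
      simp [Matrix.mulVec_single] at this
      simpa [Matrix.mulVec, dotProduct, Matrix.transpose_apply, e] using this
    have := hc (e.symm r) hker
    simpa [PiLp.inner_apply, RCLike.inner_apply, e, mul_comm] using this
  rw [hSS] at hmem
  obtain ⟨u, hu⟩ := hmem
  exact ⟨u, by simpa [L, e] using congrArg e.symm hu.symm⟩

/-- the set `D = { w ⋆ (X̃λ − y) : w ∈ [0,1]ⁿ, ‖w‖₁ ≥ n−k }` is
convex, and it meets `ker(Xᵀ)` iff for every `u` there is a feasible `w` making
`Σᵢ wᵢ(⟨X̃ᵢ,λ⟩ − yᵢ)⟨Xᵢ,u⟩` nonnegative. -/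
theorem stability_dual_reformulation (n d : ℕ)
    (X : Matrix (Fin n) (Fin d) ℝ) (Xt : Matrix (Fin n) (Fin (d - 1)) ℝ)
    (y : Fin n → ℝ) (lam : Fin (d - 1) → ℝ) (k : ℝ) (hk0 : 0 ≤ k) (hkn : k ≤ n) :
    Convex ℝ {v : Fin n → ℝ | ∃ w : Fin n → ℝ,
        (∀ i, 0 ≤ w i ∧ w i ≤ 1) ∧ (n : ℝ) - k ≤ ∑ i, w i ∧
        v = fun i => w i * (Xt.mulVec lam i - y i)} ∧
    ((∃ v ∈ {v : Fin n → ℝ | ∃ w : Fin n → ℝ,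
        (∀ i, 0 ≤ w i ∧ w i ≤ 1) ∧ (n : ℝ) - k ≤ ∑ i, w i ∧
        v = fun i => w i * (Xt.mulVec lam i - y i)},
        X.transpose.mulVec v = 0) ↔
      ∀ u : Fin d → ℝ, ∃ w : Fin n → ℝ,
        (∀ i, 0 ≤ w i ∧ w i ≤ 1) ∧ (n : ℝ) - k ≤ ∑ i, w i ∧
        0 ≤ ∑ i, w i * (Xt.mulVec lam i - y i) * (∑ j, X i j * u j)) := by
  classical
  set b : Fin n → ℝ := fun i => Xt.mulVec lam i - y i with hbdef
  set D : Set (Fin n → ℝ) := {v : Fin n → ℝ | ∃ w : Fin n → ℝ,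
        (∀ i, 0 ≤ w i ∧ w i ≤ 1) ∧ (n : ℝ) - k ≤ ∑ i, w i ∧
        v = fun i => w i * b i} with hDdef
  have hConv : Convex ℝ D := by
    rintro v₁ ⟨w₁, hw₁, hs₁, rfl⟩ v₂ ⟨w₂, hw₂, hs₂, rfl⟩ a b' ha hb' hab
    refine ⟨a • w₁ + b' • w₂, fun i => ?_, ?_, ?_⟩
    · constructor
      · have := (hw₁ i).1; have := (hw₂ i).1
        simp only [Pi.add_apply, Pi.smul_apply, smul_eq_mul]
        positivity
      · have h1 := (hw₁ i).2; have h2 := (hw₂ i).2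
        simp only [Pi.add_apply, Pi.smul_apply, smul_eq_mul]
        nlinarith [(hw₁ i).1, (hw₂ i).1]
    · simp only [Pi.add_apply, Pi.smul_apply, smul_eq_mul, Finset.sum_add_distrib,
        ← Finset.mul_sum]
      nlinarith
    · funext i
      simp only [Pi.add_apply, Pi.smul_apply, smul_eq_mul]
      ring
  refine ⟨hConv, ?_, ?_⟩
  · -- forward direction
    rintro ⟨v, ⟨w, hw, hs, rfl⟩, hker⟩ u
    refine ⟨w, hw, hs, ?_⟩
    have key : ∑ i, w i * b i * (∑ j, X i j * u j)
        = ∑ j, (X.transpose.mulVec (fun i => w i * b i)) j * u j := by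
      simp only [Matrix.mulVec, dotProduct, Matrix.transpose_apply,
        Finset.sum_mul, Finset.mul_sum]
      rw [Finset.sum_comm]
      exact Finset.sum_congr rfl fun j _ => Finset.sum_congr rfl fun i _ => by ring
    rw [key, hker]
    simp
  · -- backward direction
    intro H
    by_contra hne
    push_neg at hne
    -- the set A of feasible weights
    set A : Set (Fin n → ℝ) := {w | (∀ i, 0 ≤ w i ∧ w i ≤ 1) ∧ (n : ℝ) - k ≤ ∑ i, w i}
      with hAdef
    set φ : (Fin n → ℝ) → (Fin n → ℝ) := fun w => fun i => w i * b i with hφdef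
    have hDim : D = φ '' A := by
      ext v
      constructor
      · rintro ⟨w, hw, hs, rfl⟩; exact ⟨w, ⟨hw, hs⟩, rfl⟩
      · rintro ⟨w, ⟨hw, hs⟩, rfl⟩; exact ⟨w, hw, hs, rfl⟩
    have hAeq : A = Set.Icc (0 : Fin n → ℝ) 1 ∩ {w | (n : ℝ) - k ≤ ∑ i, w i} := by
      ext w
      simp only [hAdef, Set.mem_setOf_eq, Set.mem_inter_iff, Set.mem_Icc,
        Pi.le_def, Pi.zero_apply, Pi.one_apply]
      exact ⟨fun ⟨h1, h2⟩ => ⟨⟨fun i => (h1 i).1, fun i => (h1 i).2⟩, h2⟩,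
        fun ⟨⟨h1, h2⟩, h3⟩ => ⟨fun i => ⟨h1 i, h2 i⟩, h3⟩⟩
    have hAcomp : IsCompact A := by
      rw [hAeq]
      exact isCompact_Icc.inter_right
        (isClosed_le continuous_const (continuous_finset_sum _ fun i _ => continuous_apply i))
    have hφcont : Continuous φ :=
      continuous_pi fun i => (continuous_apply i).mul continuous_const
    have hDcomp : IsCompact D := hDim ▸ hAcomp.image hφcont
    set Kr : Set (Fin n → ℝ) := {v | X.transpose.mulVec v = 0} with hKdef
    have hKconv : Convex ℝ Kr := by
      rintro v₁ h₁ v₂ h₂ a b' _ _ _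
      simp only [hKdef, Set.mem_setOf_eq] at h₁ h₂ ⊢
      rw [Matrix.mulVec_add, Matrix.mulVec_smul, Matrix.mulVec_smul, h₁, h₂]
      simp
    have hKclosed : IsClosed Kr := by
      have : Continuous fun v : Fin n → ℝ => X.transpose.mulVec v :=
        (Matrix.mulVecLin X.transpose).continuous_of_finiteDimensional
      exact isClosed_eq this continuous_const
    have hdisj : Disjoint D Kr := by
      rw [Set.disjoint_left]
      intro v hv hvk
      exact hne v hv hvk
    obtain ⟨f, s, t, hfD, hst, hfK⟩ :=
      geometric_hahn_banach_compact_closed hConv hDcomp hKconv hKclosed hdisj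
    -- f vanishes on Kr, and t < 0 hence s < 0
    have hf0 : ∀ v ∈ Kr, f v = 0 := by
      intro v hv
      by_contra hfv
      -- scale: for any r : ℝ, r • v ∈ Kr
      have hmem : ∀ r : ℝ, r • v ∈ Kr := by
        intro r
        simp only [hKdef, Set.mem_setOf_eq] at hv ⊢
        rw [Matrix.mulVec_smul, hv]; simp
      have h1 := hfK _ (hmem ((t - 1) / f v))
      have h2 := hfK _ (hmem (-((t - 1) / f v)))
      simp only [map_smul, smul_eq_mul] at h1 h2
      rcases lt_or_gt_of_ne hfv with h | h
      · nlinarith [div_mul_cancel₀ (t - 1) hfv]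
      · nlinarith [div_mul_cancel₀ (t - 1) hfv]
    have ht0 : t < 0 := by
      have h0 : (0 : Fin n → ℝ) ∈ Kr := by simp [hKdef]
      have := hfK 0 h0
      simpa using this
    have hs0 : s < 0 := hst.trans ht0
    -- represent f by a vector c
    set c : Fin n → ℝ := fun i => f (Pi.single i 1) with hcdef
    have hfrep : ∀ a : Fin n → ℝ, f a = ∑ i, a i * c i := by
      intro a
      have ha : a = ∑ i, a i • (Pi.single i 1 : Fin n → ℝ) := by
        funext j
        simp [Pi.single_apply, Finset.sum_apply]
      conv_lhs => rw [ha]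
      rw [map_sum]
      simp [hcdef]
    have hcortho : ∀ v : Fin n → ℝ, X.transpose.mulVec v = 0 → ∑ i, v i * c i = 0 := by
      intro v hv
      rw [← hfrep]
      exact hf0 v hv
    obtain ⟨u, hu⟩ := range_of_ortho_ker n d X c hcortho
    obtain ⟨w, hw, hsum, hpos⟩ := H u
    have hDmem : (fun i => w i * b i) ∈ D := ⟨w, hw, hsum, rfl⟩
    have hneg := hfD _ hDmem
    rw [hfrep] at hneg
    have hval : ∑ i, (fun i => w i * b i) i * c i
        = ∑ i, w i * b i * (∑ j, X i j * u j) := by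
      refine Finset.sum_congr rfl fun i _ => ?_
      rw [hu]
      simp [Matrix.mulVec, dotProduct]
    rw [hval] at hneg
    linarith
end

section
/- The concept class of affine halfspaces in ℝᵐ, i.e. functions x ↦ 1[⟨a,x⟩ + b ≤ 0] for a ∈ ℝᵐ, b ∈ ℝ, has VC dimension at most m+1. -/
/-- affine halfspaces `x ↦ 1[⟨a,x⟩ + b ≤ 0]` in `ℝᵐ` have VC
dimension at most `m+1`: any shattered finite set has cardinality at most `m+1`. -/
theorem vc_dim_affine_halfspaces (m : ℕ)
    (S : Finset (Fin m → ℝ))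
    (hshatter : ∀ T : Finset (Fin m → ℝ), T ⊆ S →
      ∃ (a : Fin m → ℝ) (b : ℝ), ∀ x ∈ S, ((∑ j, a j * x j) + b ≤ 0 ↔ x ∈ T)) :
    S.card ≤ m + 1 := by
  by_contra hcard
  push_neg at hcard
  -- lift points to ℝ^{m+1}
  let v : {x // x ∈ S} → (Fin (m + 1) → ℝ) :=
    fun x => Fin.snoc (fun j => (x : Fin m → ℝ) j) 1
  have hnli : ¬ LinearIndependent ℝ v := by
    intro h
    have h1 := h.fintype_card_le_finrank
    rw [Module.finrank_fintype_fun_eq_card, Fintype.card_fin, Fintype.card_coe] at h1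
    omega
  obtain ⟨g, hg0, i0, hi0⟩ := Fintype.not_linearIndependent_iff.mp hnli
  -- coefficient function on points
  let c : (Fin m → ℝ) → ℝ := fun x => if h : x ∈ S then g ⟨x, h⟩ else 0
  have hcS : ∀ i : {x // x ∈ S}, c (i : Fin m → ℝ) = g i := by
    intro i; simp only [c, dif_pos i.2]
  have hcoord : ∀ k : Fin (m + 1), ∑ x ∈ S.attach, g x * v x k = 0 := by
    intro k
    have := congrFun hg0 k
    simpa [Finset.sum_apply] using this
  have hsum : ∑ x ∈ S, c x = 0 := by
    rw [← Finset.sum_attach S c]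
    have := hcoord (Fin.last m)
    simp only [v, Fin.snoc_last, mul_one] at this
    rw [← this]
    exact Finset.sum_congr rfl fun i _ => by rw [hcS]
  have hsumj : ∀ j : Fin m, ∑ x ∈ S, c x * x j = 0 := by
    intro j
    rw [← Finset.sum_attach S (fun x => c x * x j)]
    have := hcoord (Fin.castSucc j)
    simp only [v, Fin.snoc_castSucc] at this
    rw [← this]
    exact Finset.sum_congr rfl fun i _ => by rw [hcS]
  -- the halfspace for T = points with negative coefficient
  obtain ⟨a, b, hab⟩ := hshatter (S.filter fun x => c x < 0) (Finset.filter_subset _ _)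
  set f : (Fin m → ℝ) → ℝ := fun x => (∑ j, a j * x j) + b with hf
  have key : ∑ x ∈ S, c x * f x = 0 := by
    have hstep : ∀ x ∈ S, c x * f x = (∑ j, a j * (c x * x j)) + b * c x := by
      intro x hx
      simp only [f]
      rw [mul_add, mul_comm (c x) b, Finset.mul_sum]
      congr 1
      exact Finset.sum_congr rfl fun j _ => by ring
    rw [Finset.sum_congr rfl hstep, Finset.sum_add_distrib, ← Finset.mul_sum, hsum,
      mul_zero, add_zero, Finset.sum_comm]
    refine Finset.sum_eq_zero fun j _ => ?_
    rw [← Finset.mul_sum, hsumj, mul_zero]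
  have hnonneg : ∀ x ∈ S, 0 ≤ c x * f x := by
    intro x hx
    rcases lt_or_ge (c x) 0 with hc | hc
    · have hxT : x ∈ S.filter fun x => c x < 0 := Finset.mem_filter.mpr ⟨hx, hc⟩
      have hfx : f x ≤ 0 := (hab x hx).mpr hxT
      nlinarith [mul_nonneg (neg_nonneg.mpr hc.le) (neg_nonneg.mpr hfx)]
    · have hfx : 0 < f x := by
        by_contra h
        push_neg at h
        have hxT := (hab x hx).mp h
        exact absurd (Finset.mem_filter.mp hxT).2 (not_lt.mpr hc)
      exact mul_nonneg hc hfx.le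
  -- there is a point with positive coefficient
  have hex : ∃ x ∈ S, 0 < c x := by
    by_contra h
    push_neg at h
    have hall : ∀ x ∈ S, c x = 0 :=
      (Finset.sum_eq_zero_iff_of_nonpos h).mp hsum
    have : c (i0 : Fin m → ℝ) = 0 := hall _ i0.2
    rw [hcS] at this
    exact hi0 this
  obtain ⟨x0, hx0S, hx0⟩ := hex
  have hfx0 : 0 < f x0 := by
    by_contra h
    push_neg at h
    have hxT := (hab x0 hx0S).mp h
    exact absurd (Finset.mem_filter.mp hxT).2 (not_lt.mpr hx0.le)
  have hpos : 0 < ∑ x ∈ S, c x * f x :=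
    Finset.sum_pos' hnonneg ⟨x0, hx0S, mul_pos hx0 hfx0⟩
  rw [key] at hpos
  exact lt_irrefl 0 hpos
end

section
/- Let X : n×d be a real matrix, y ∈ ℝⁿ, and suppose β⁽⁰⁾ minimizes ‖Xβ − y‖₂ over β ∈ ℝᵈ, with M = ‖Xβ⁽⁰⁾ − y‖₂ > 0. Let w ∈ [0,1]ⁿ and β* be such that Xᵀ(w ⋆ (Xβ* − y)) = 0, i.e., β* is a weighted OLS solution with weights w. Let B = { i ∈ [n] : |⟨Xᵢ,β*⟩ − yᵢ| > M }. Then Σ_{i ∈ B} wᵢ ≤ 1. -/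
/-!
Since `β*` solves the weighted normal equations, it minimizes the weighted residual sum of squares
`∑ wᵢ (⟨Xᵢ, β⟩ - yᵢ)²`; comparing with `β⁽⁰⁾` and using `wᵢ ≤ 1` bounds that sum at `β*` by `M²`.
Every sample of `B` contributes more than `M² wᵢ` to it, so `M² ∑_{i ∈ B} wᵢ ≤ M²`.
-/

open Matrix Finset

section WeightedLeastSquares

variable {R m n : Type*} [Fintype m] [Fintype n]

def weightedRSS [CommRing R] (X : Matrix m n R) (y w : m → R) (β : n → R) : R :=
  ∑ i, w i * ((X *ᵥ β) i - y i) ^ 2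

theorem weighted_residual_dotProduct_mulVec_eq_zero [CommRing R] {X : Matrix m n R}
    {y w : m → R} {β : n → R} (hβ : Xᵀ *ᵥ (fun i => w i * ((X *ᵥ β) i - y i)) = 0)
    (δ : n → R) : (fun i => w i * ((X *ᵥ β) i - y i)) ⬝ᵥ X *ᵥ δ = 0 := by
  rw [dotProduct_mulVec, ← mulVec_transpose, hβ, zero_dotProduct]

theorem weightedRSS_le_of_normal_eq [CommRing R] [LinearOrder R] [IsStrictOrderedRing R]
    {X : Matrix m n R} {y w : m → R} (hw : ∀ i, 0 ≤ w i) {β : n → R}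
    (hβ : Xᵀ *ᵥ (fun i => w i * ((X *ᵥ β) i - y i)) = 0) (β' : n → R) :
    weightedRSS X y w β ≤ weightedRSS X y w β' := by
  set δ := β' - β
  have hcross := weighted_residual_dotProduct_mulVec_eq_zero hβ δ
  -- expand `Xβ' - y = (Xβ - y) + Xδ`
  have hexpand : weightedRSS X y w β' = weightedRSS X y w β
      + 2 * ((fun i => w i * ((X *ᵥ β) i - y i)) ⬝ᵥ X *ᵥ δ) + ∑ i, w i * ((X *ᵥ δ) i) ^ 2 := by
    simp only [weightedRSS, dotProduct, mulVec_sub, δ, Pi.sub_apply, mul_sum,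
      ← sum_add_distrib]
    exact sum_congr rfl fun i _ => by ring
  have hquad : 0 ≤ ∑ i, w i * ((X *ᵥ δ) i) ^ 2 :=
    sum_nonneg fun i _ => mul_nonneg (hw i) (sq_nonneg _)
  rw [hexpand, hcross]
  linarith

theorem weightedRSS_le_of_le_one [CommRing R] [LinearOrder R] [IsStrictOrderedRing R]
    (X : Matrix m n R) (y : m → R) {w : m → R} (hw : ∀ i, w i ≤ 1) (β : n → R) :
    weightedRSS X y w β ≤ ∑ i, ((X *ᵥ β) i - y i) ^ 2 :=
  sum_le_sum fun i _ => mul_le_of_le_one_left (sq_nonneg _) (hw i)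

end WeightedLeastSquares

theorem sq_mul_sum_filter_lt_abs_le {R ι : Type*} [CommRing R] [LinearOrder R]
    [IsStrictOrderedRing R] (s : Finset ι) {w : ι → R} (hw : ∀ i, 0 ≤ w i) (r : ι → R)
    {c : R} (hc : 0 ≤ c) :
    c ^ 2 * ∑ i ∈ s with c < |r i|, w i ≤ ∑ i ∈ s, w i * r i ^ 2 := by
  rw [mul_sum]
  calc ∑ i ∈ s with c < |r i|, c ^ 2 * w i
      ≤ ∑ i ∈ s with c < |r i|, w i * r i ^ 2 := by
        refine sum_le_sum fun i hi => ?_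
        have hcr : c ^ 2 ≤ r i ^ 2 :=
          sq_abs (r i) ▸ pow_le_pow_left₀ hc (mem_filter.mp hi).2.le 2
        rw [mul_comm]
        exact mul_le_mul_of_nonneg_left hcr (hw i)
    _ ≤ ∑ i ∈ s, w i * r i ^ 2 :=
        sum_le_sum_of_subset_of_nonneg (filter_subset _ _)
          fun i _ _ => mul_nonneg (hw i) (sq_nonneg _)

theorem weight_on_large_residuals_le_one_general (n d : ℕ)
    (X : Matrix (Fin n) (Fin d) ℝ) (y : Fin n → ℝ)
    (β₀ : Fin d → ℝ)
    (M : ℝ) (hM : M = Real.sqrt (∑ i, (X.mulVec β₀ i - y i) ^ 2)) (hMpos : 0 < M)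
    (w : Fin n → ℝ) (hw : ∀ i, 0 ≤ w i ∧ w i ≤ 1)
    (βs : Fin d → ℝ)
    (hβs : X.transpose.mulVec (fun i => w i * (X.mulVec βs i - y i)) = 0) :
    ∑ i ∈ Finset.univ.filter (fun i => M < |X.mulVec βs i - y i|), w i ≤ 1 := by
  have hM2 : M ^ 2 = ∑ i, ((X *ᵥ β₀) i - y i) ^ 2 := by
    rw [hM, Real.sq_sqrt (sum_nonneg fun i _ => sq_nonneg _)]
  have hbound : M ^ 2 * ∑ i with M < |(X *ᵥ βs) i - y i|, w i ≤ M ^ 2 * 1 :=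
    calc M ^ 2 * ∑ i with M < |(X *ᵥ βs) i - y i|, w i
        ≤ weightedRSS X y w βs :=
          sq_mul_sum_filter_lt_abs_le _ (fun i => (hw i).1) _ hMpos.le
      _ ≤ weightedRSS X y w β₀ := weightedRSS_le_of_normal_eq (fun i => (hw i).1) hβs β₀
      _ ≤ M ^ 2 * 1 := by
          rw [mul_one, hM2]
          exact weightedRSS_le_of_le_one X y (fun i => (hw i).2) β₀
  exact le_of_mul_le_mul_left hbound (pow_pos hMpos 2)

/-- if `β⁽⁰⁾` minimizes `‖Xβ − y‖₂` with value `M > 0`, and `β*`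
is a weighted OLS solution for weights `w ∈ [0,1]ⁿ`, then the total weight on
samples whose residual at `β*` exceeds `M` in magnitude is at most `1`. -/
theorem weight_on_large_residuals_le_one (n d : ℕ)
    (X : Matrix (Fin n) (Fin d) ℝ) (y : Fin n → ℝ)
    (β₀ : Fin d → ℝ)
    (hβ₀ : ∀ β : Fin d → ℝ,
      Real.sqrt (∑ i, (X.mulVec β₀ i - y i) ^ 2) ≤
        Real.sqrt (∑ i, (X.mulVec β i - y i) ^ 2))
    (M : ℝ) (hM : M = Real.sqrt (∑ i, (X.mulVec β₀ i - y i) ^ 2)) (hMpos : 0 < M)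
    (w : Fin n → ℝ) (hw : ∀ i, 0 ≤ w i ∧ w i ≤ 1)
    (βs : Fin d → ℝ)
    (hβs : X.transpose.mulVec (fun i => w i * (X.mulVec βs i - y i)) = 0) :
    ∑ i ∈ Finset.univ.filter (fun i => M < |X.mulVec βs i - y i|), w i ≤ 1 :=
  weight_on_large_residuals_le_one_general n d X y β₀ M hM hMpos w hw βs hβs
end

section
/- Let a, b ∈ ℝⁿ be unit vectors with ‖a − b‖₂ ≤ γ, let u ∈ ℝⁿ, and let w* ∈ [0,1]ⁿ satisfy Σᵢ w*ᵢ aᵢ uᵢ ≥ 0. Suppose at most one coordinate of w* is strictly between 0 and 1. Let δ, ε > 0 with γ ≤ ε δ², and suppose |{ i : |aᵢ| < δ/√n }| ≤ εn, |{ i : |bᵢ| < δ/√n }| ≤ εn, and |{ i : |uᵢ| < (δ/√n)·‖u‖₂ }| ≤ εn. Then there exists w ∈ [0,1]ⁿ with Σᵢ wᵢ bᵢ uᵢ ≥ 0 and ‖w‖₁ ≥ ‖w*‖₁ − 3εn − 1. -/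
/-!
Cauchy–Schwarz turns the feasibility of `w*` for `a` into `∑ w*ᵢ bᵢ uᵢ ≥ -γ‖u‖`. Call a
coordinate heavy if `w*ᵢ = 1` and `bᵢ uᵢ ≤ -(δ²/n)‖u‖`, and put `x = γn/δ² ≤ εn`. If there are at
least `⌈x⌉` heavy coordinates, zeroing `⌈x⌉` of them gains at least `x · (δ²/n)‖u‖ = γ‖u‖` and costs
`⌈x⌉ < εn + 1`. Otherwise zero every coordinate with `w*ᵢ > 0` and `bᵢ uᵢ < 0`: such a coordinate
is heavy (fewer than `x` of them), or has `|bᵢ|` or `|uᵢ|` small, or is the fractional one.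
-/

open Finset

theorem mul_le_neg_mul_of_le_abs {b u s t : ℝ} (ht : 0 ≤ t) (hb : s ≤ |b|)
    (hu : t ≤ |u|) (hbu : b * u < 0) : b * u ≤ -(s * t) := by
  have : s * t ≤ |b * u| := abs_mul b u ▸ mul_le_mul hb hu ht (abs_nonneg b)
  rw [abs_of_neg hbu] at this
  linarith

section

variable {ι : Type*} [Fintype ι]

theorem sum_mul_mul_le_sqrt_mul_sqrt_of_abs_le_one {w : ι → ℝ} (hw : ∀ i, |w i| ≤ 1)
    (x y : ι → ℝ) :
    ∑ i, w i * x i * y i ≤ √(∑ i, x i ^ 2) * √(∑ i, y i ^ 2) :=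
  calc ∑ i, w i * x i * y i ≤ ∑ i, |x i| * |y i| := sum_le_sum fun i _ =>
        calc w i * x i * y i ≤ |w i * x i * y i| := le_abs_self _
          _ = |w i| * (|x i| * |y i|) := by rw [abs_mul, abs_mul, mul_assoc]
          _ ≤ |x i| * |y i| := mul_le_of_le_one_left (by positivity) (hw i)
    _ ≤ √(∑ i, |x i| ^ 2) * √(∑ i, |y i| ^ 2) := Real.sum_mul_le_sqrt_mul_sqrt _ _ _
    _ = √(∑ i, x i ^ 2) * √(∑ i, y i ^ 2) := by simp only [sq_abs]

theorem sum_mul_mul_sub_sqrt_mul_sqrt_le {w : ι → ℝ} (hw : ∀ i, |w i| ≤ 1) (a b u : ι → ℝ) :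
    ∑ i, w i * a i * u i - √(∑ i, (a i - b i) ^ 2) * √(∑ i, u i ^ 2) ≤ ∑ i, w i * b i * u i := by
  have hsub : ∑ i, w i * a i * u i - ∑ i, w i * b i * u i = ∑ i, w i * (a i - b i) * u i := by
    rw [← sum_sub_distrib]
    exact sum_congr rfl fun i _ => by ring
  linarith [sum_mul_mul_le_sqrt_mul_sqrt_of_abs_le_one hw (fun i => a i - b i) u]

theorem sum_piecewise_zero_mul [DecidableEq ι] (Z : Finset ι) (w c : ι → ℝ) :
    ∑ i, Z.piecewise (fun _ => 0) w i * c i = ∑ i, w i * c i - ∑ i ∈ Z, w i * c i := by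
  rw [← sum_add_sum_compl Z, sum_eq_zero fun i hi => by simp [piecewise_eq_of_mem _ _ _ hi],
    zero_add, sum_congr rfl fun i hi => by rw [piecewise_eq_of_notMem _ _ _ (mem_compl.1 hi)]]
  exact eq_sub_of_add_eq' (sum_add_sum_compl Z _)

end

section

variable {ι : Type*} [DecidableEq ι] {w : ι → ℝ}

theorem piecewise_zero_mem_unitInterval (hw : ∀ i, 0 ≤ w i ∧ w i ≤ 1) (Z : Finset ι) (i : ι) :
    0 ≤ Z.piecewise (fun _ => 0) w i ∧ Z.piecewise (fun _ => 0) w i ≤ 1 := by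
  by_cases hi : i ∈ Z <;> simp [hi, hw i]

variable [Fintype ι]

theorem sum_sub_card_le_sum_piecewise_zero (hw : ∀ i, w i ≤ 1) (Z : Finset ι) :
    ∑ i, w i - #Z ≤ ∑ i, Z.piecewise (fun _ => 0) w i := by
  have h := sum_piecewise_zero_mul Z w 1
  simp only [Pi.one_apply, mul_one] at h
  rw [h, sub_le_sub_iff_left]
  simpa using sum_le_card_nsmul Z w 1 fun i _ => hw i

theorem sum_piecewise_zero_neg_mul_nonneg (hw : ∀ i, 0 ≤ w i) (c : ι → ℝ) :
    0 ≤ ∑ i, (univ.filter fun i => 0 < w i ∧ c i < 0).piecewise (fun _ => 0) w i * c i := by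
  refine sum_nonneg fun i _ => ?_
  by_cases hi : 0 < w i ∧ c i < 0
  · simp [hi]
  · rw [piecewise_eq_of_notMem _ _ _ (by simpa using hi)]
    rcases (hw i).lt_or_eq with hwi | hwi
    · exact mul_nonneg hwi.le (not_lt.1 fun hc => hi ⟨hwi, hc⟩)
    · simp [← hwi]

theorem sum_mul_add_card_mul_le_sum_piecewise_zero {c : ι → ℝ} {η : ℝ} {Z : Finset ι}
    (hZ : ∀ i ∈ Z, w i = 1 ∧ c i ≤ -η) :
    ∑ i, w i * c i + #Z * η ≤ ∑ i, Z.piecewise (fun _ => 0) w i * c i := by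
  have hZsum : ∑ i ∈ Z, w i * c i ≤ -(#Z * η) := by
    simpa [mul_comm] using sum_le_card_nsmul Z (fun i => w i * c i) (-η) fun i hi => by
      simpa [(hZ i hi).1] using (hZ i hi).2
  rw [sum_piecewise_zero_mul]
  linarith

theorem exists_finset_nonneg_sum_piecewise_zero (hw : ∀ i, 0 ≤ w i ∧ w i ≤ 1) (c : ι → ℝ)
    {x η : ℝ} (hx : 0 ≤ x) (hη : 0 ≤ η) (hfeas : -(x * η) ≤ ∑ i, w i * c i) :
    ∃ Z : Finset ι, 0 ≤ ∑ i, Z.piecewise (fun _ => 0) w i * c i ∧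
      (#Z : ℝ) ≤
        x + max 1 (#(univ.filter fun i => 0 < w i ∧ c i < 0 ∧ ¬(w i = 1 ∧ c i ≤ -η)) : ℝ) := by
  set G := univ.filter fun i => w i = 1 ∧ c i ≤ -η
  set B := univ.filter fun i => 0 < w i ∧ c i < 0 ∧ ¬(w i = 1 ∧ c i ≤ -η)
  by_cases hG : ⌈x⌉₊ ≤ #G
  · obtain ⟨Z, hZG, hZ⟩ := exists_subset_card_eq hG
    refine ⟨Z, ?_, ?_⟩
    · have hgain := sum_mul_add_card_mul_le_sum_piecewise_zero (w := w) fun i hi => by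
        simpa [G] using hZG hi
      rw [hZ] at hgain
      linarith [mul_le_mul_of_nonneg_right (Nat.le_ceil x) hη]
    · rw [hZ]
      linarith [Nat.ceil_lt_add_one hx, le_max_left (1 : ℝ) #B]
  · refine ⟨_, sum_piecewise_zero_neg_mul_nonneg (fun i => (hw i).1) c, ?_⟩
    have hsplit : univ.filter (fun i => 0 < w i ∧ c i < 0) ⊆ G ∪ B := by
      intro i
      simp only [G, B, mem_union, mem_filter, mem_univ, true_and]
      tauto
    have hcard := (card_le_card hsplit).trans (card_union_le _ _)
    have hGx : (#G : ℝ) < x := Nat.lt_ceil.1 (not_le.1 hG)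
    have hcard' : (#(univ.filter fun i => 0 < w i ∧ c i < 0) : ℝ) ≤ #G + #B := by
      exact_mod_cast hcard
    linarith [le_max_right (1 : ℝ) #B]

theorem card_filter_neg_mul_not_le_le (hw : ∀ i, w i ≤ 1) (b u : ι → ℝ) (s : ℝ) {t : ℝ}
    (ht : 0 ≤ t) :
    #(univ.filter fun i => 0 < w i ∧ b i * u i < 0 ∧ ¬(w i = 1 ∧ b i * u i ≤ -(s * t))) ≤
      #(univ.filter fun i => |b i| < s) + #(univ.filter fun i => |u i| < t) +
        #(univ.filter fun i => 0 < w i ∧ w i < 1) := by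
  refine (card_le_card fun i hi => ?_).trans
    ((card_union_le _ _).trans (Nat.add_le_add_right (card_union_le _ _) _))
  simp only [mem_union, mem_filter, mem_univ, true_and] at hi ⊢
  obtain ⟨hw0, hneg, hnot⟩ := hi
  by_contra! ⟨⟨hb, hu⟩, hw1⟩
  exact hnot ⟨le_antisymm (hw i) (hw1 hw0), mul_le_neg_mul_of_le_abs ht hb hu hneg⟩

theorem exists_rounding_mul_mul (hw : ∀ i, 0 ≤ w i ∧ w i ≤ 1)
    (hfrac : #(univ.filter fun i => 0 < w i ∧ w i < 1) ≤ 1) (b u : ι → ℝ) {s t x : ℝ}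
    (hs : 0 ≤ s) (ht : 0 ≤ t) (hx : 0 ≤ x) (hfeas : -(x * (s * t)) ≤ ∑ i, w i * b i * u i) :
    ∃ w' : ι → ℝ, (∀ i, 0 ≤ w' i ∧ w' i ≤ 1) ∧ 0 ≤ ∑ i, w' i * b i * u i ∧
      ∑ i, w i - x - #(univ.filter fun i => |b i| < s) - #(univ.filter fun i => |u i| < t) - 1
        ≤ ∑ i, w' i := by
  simp only [mul_assoc] at hfeas ⊢
  obtain ⟨Z, hZ, hZcard⟩ :=
    exists_finset_nonneg_sum_piecewise_zero hw (fun i => b i * u i) hx (mul_nonneg hs ht) hfeas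
  refine ⟨Z.piecewise (fun _ => 0) w, piecewise_zero_mem_unitInterval hw Z, hZ, ?_⟩
  set B := univ.filter fun i => 0 < w i ∧ b i * u i < 0 ∧ ¬(w i = 1 ∧ b i * u i ≤ -(s * t))
  set Sb := univ.filter fun i => |b i| < s
  set Su := univ.filter fun i => |u i| < t
  have hB : #B ≤ #Sb + #Su + 1 := (card_filter_neg_mul_not_le_le (fun i => (hw i).2) b u s ht).trans
    (Nat.add_le_add_left hfrac _)
  have hmax : max 1 (#B : ℝ) ≤ #Sb + #Su + 1 :=
    max_le (by linarith [(#Sb).cast_nonneg (α := ℝ), (#Su).cast_nonneg (α := ℝ)])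
      (by exact_mod_cast hB)
  linarith [sum_sub_card_le_sum_piecewise_zero (fun i => (hw i).2) Z]

end

theorem net_rounding_lemma_general (n : ℕ) (a b u : Fin n → ℝ) (γ δ ε : ℝ)
    (hδ : 0 < δ) (hγ : γ ≤ ε * δ ^ 2)
    (ha1 : ∑ i, a i ^ 2 = 1)
    (hab : Real.sqrt (∑ i, (a i - b i) ^ 2) ≤ γ)
    (ws : Fin n → ℝ) (hws : ∀ i, 0 ≤ ws i ∧ ws i ≤ 1)
    (hfeas : 0 ≤ ∑ i, ws i * a i * u i)
    (hfrac : (Finset.univ.filter (fun i => 0 < ws i ∧ ws i < 1)).card ≤ 1)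
    (hsb : ((Finset.univ.filter (fun i => |b i| < δ / Real.sqrt n)).card : ℝ) ≤ ε * n)
    (hsu : ((Finset.univ.filter
        (fun i => |u i| < (δ / Real.sqrt n) * Real.sqrt (∑ j, u j ^ 2))).card : ℝ)
          ≤ ε * n) :
    ∃ w : Fin n → ℝ, (∀ i, 0 ≤ w i ∧ w i ≤ 1) ∧
      0 ≤ ∑ i, w i * b i * u i ∧
      (∑ i, ws i) - 3 * ε * n - 1 ≤ ∑ i, w i := by
  have hn : (0 : ℝ) < n := Nat.cast_pos.2 <| Nat.pos_of_ne_zero <| by rintro rfl; simp at ha1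
  set s := δ / √n
  set U := √(∑ j, u j ^ 2)
  have hs : 0 ≤ s := by positivity
  have hU : 0 ≤ U := Real.sqrt_nonneg _
  have hγ0 : 0 ≤ γ := (Real.sqrt_nonneg _).trans hab
  have hxη : γ * n / δ ^ 2 * (s * (s * U)) = γ * U := by
    simp only [s]
    field_simp
    rw [Real.sq_sqrt hn.le]
  have hfeas_b : -(γ * n / δ ^ 2 * (s * (s * U))) ≤ ∑ i, ws i * b i * u i := by
    rw [hxη]
    linarith [mul_le_mul_of_nonneg_right hab hU, sum_mul_mul_sub_sqrt_mul_sqrt_le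
      (fun i => abs_le.2 ⟨by linarith [(hws i).1], (hws i).2⟩) a b u]
  obtain ⟨w, hw, hwb, hloss⟩ :=
    exists_rounding_mul_mul hws hfrac b u hs (mul_nonneg hs hU) (by positivity) hfeas_b
  have hx : γ * n / δ ^ 2 ≤ ε * n := by
    rw [div_le_iff₀ (by positivity)]
    linarith [mul_le_mul_of_nonneg_right hγ hn.le]
  exact ⟨w, hw, hwb, by linarith⟩

/-- rounding lemma for the net algorithm. If `a, b` are unit
vectors with `‖a − b‖₂ ≤ γ ≤ εδ²`, `w*` is a feasible weight vector for `a`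
with at most one fractional coordinate, and the small-coordinate sets of
`a`, `b`, `u` each have size at most `εn`, then `w*` can be rounded to a
feasible `w` for `b` with `‖w‖₁ ≥ ‖w*‖₁ − 3εn − 1`. -/
theorem net_rounding_lemma (n : ℕ) (a b u : Fin n → ℝ) (γ δ ε : ℝ)
    (hδ : 0 < δ) (hε : 0 < ε) (hγ : γ ≤ ε * δ ^ 2)
    (ha1 : ∑ i, a i ^ 2 = 1) (hb1 : ∑ i, b i ^ 2 = 1)
    (hab : Real.sqrt (∑ i, (a i - b i) ^ 2) ≤ γ)
    (ws : Fin n → ℝ) (hws : ∀ i, 0 ≤ ws i ∧ ws i ≤ 1)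
    (hfeas : 0 ≤ ∑ i, ws i * a i * u i)
    (hfrac : (Finset.univ.filter (fun i => 0 < ws i ∧ ws i < 1)).card ≤ 1)
    (hsa : ((Finset.univ.filter (fun i => |a i| < δ / Real.sqrt n)).card : ℝ) ≤ ε * n)
    (hsb : ((Finset.univ.filter (fun i => |b i| < δ / Real.sqrt n)).card : ℝ) ≤ ε * n)
    (hsu : ((Finset.univ.filter
        (fun i => |u i| < (δ / Real.sqrt n) * Real.sqrt (∑ j, u j ^ 2))).card : ℝ)
          ≤ ε * n) :
    ∃ w : Fin n → ℝ, (∀ i, 0 ≤ w i ∧ w i ≤ 1) ∧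
      0 ≤ ∑ i, w i * b i * u i ∧
      (∑ i, ws i) - 3 * ε * n - 1 ≤ ∑ i, w i :=
  net_rounding_lemma_general n a b u γ δ ε hδ hγ ha1 hab ws hws hfeas hfrac hsb hsu
end

section
/- Suppose there is an algorithm running in time n^{o(d)} that, given X₁,…,Xₙ ∈ ℝᵈ, y₁,…,yₙ ∈ ℝ, and integer k, decides whether the finite-sample stability SNS(X,y) ≤ n−k. Then the following reduction is correct: given vectors v₁,…,vₙ ∈ ℝᵈ and scalars c₁,…,cₙ ∈ ℝ, define Xᵢ = (cᵢ, vᵢ) ∈ ℝ^{d+1} and yᵢ = cᵢ. Then SNS(X,y) ≤ n−k if and only if max_{λ ∈ ℝᵈ} |{ i ∈ [n] : ⟨vᵢ,λ⟩ = cᵢ }| ≥ k. -/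
/-- The finite-sample stability: the infimum of `n − ‖w‖₁` over weights
`w ∈ [0,1]ⁿ` and regressors `β` with first coordinate zero that minimize the
weighted least squares objective. -/
noncomputable def sns (n d : ℕ) (X : Matrix (Fin n) (Fin (d + 1)) ℝ)
    (y : Fin n → ℝ) : ℝ :=
  sInf {s : ℝ | ∃ (w : Fin n → ℝ) (β : Fin (d + 1) → ℝ),
    (∀ i, 0 ≤ w i ∧ w i ≤ 1) ∧ β 0 = 0 ∧
    (∀ β' : Fin (d + 1) → ℝ,
      ∑ i, w i * (X.mulVec β i - y i) ^ 2 ≤ ∑ i, w i * (X.mulVec β' i - y i) ^ 2) ∧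
    s = (n : ℝ) - ∑ i, w i}

lemma sns_mv (n d : ℕ) (v : Fin n → Fin d → ℝ) (c : Fin n → ℝ)
    (β : Fin (d + 1) → ℝ) (i : Fin n) :
    (Matrix.of fun i => Fin.cons (c i) (v i)).mulVec β i
      = c i * β 0 + ∑ j, v i j * β j.succ := by
  simp [Matrix.mulVec, dotProduct, Fin.sum_univ_succ]

/-- correctness of the reduction from Maximum Feasible Subsystem
to computing the finite-sample stability: with `Xᵢ = (cᵢ, vᵢ)` and `yᵢ = cᵢ`,
`SNS(X,y) ≤ n − k` iff some `λ` satisfies `⟨vᵢ,λ⟩ = cᵢ` for at least `k`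
indices `i`. -/
theorem sns_mfs_reduction (n d : ℕ) (v : Fin n → Fin d → ℝ) (c : Fin n → ℝ)
    (k : ℕ) (hk : k ≤ n) :
    sns n d (Matrix.of fun i => Fin.cons (c i) (v i)) c ≤ (n : ℝ) - k ↔
      ∃ lam : Fin d → ℝ,
        k ≤ (Finset.univ.filter (fun i => (∑ j, v i j * lam j) = c i)).card := by
  classical
  set X : Matrix (Fin n) (Fin (d + 1)) ℝ := Matrix.of fun i => Fin.cons (c i) (v i) with hX
  set S : Set ℝ := {s : ℝ | ∃ (w : Fin n → ℝ) (β : Fin (d + 1) → ℝ),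
    (∀ i, 0 ≤ w i ∧ w i ≤ 1) ∧ β 0 = 0 ∧
    (∀ β' : Fin (d + 1) → ℝ,
      ∑ i, w i * (X.mulVec β i - c i) ^ 2 ≤ ∑ i, w i * (X.mulVec β' i - c i) ^ 2) ∧
    s = (n : ℝ) - ∑ i, w i} with hS
  have hsns : sns n d X c = sInf S := rfl
  -- X applied to e₁ = Fin.cons 1 0 gives c
  have he1 : ∀ i, X.mulVec (Fin.cons 1 0) i = c i := by
    intro i
    rw [sns_mv]
    simp
  have hbdd : BddBelow S := by
    refine ⟨0, ?_⟩
    rintro s ⟨w, β, hw, -, -, rfl⟩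
    have h1 : ∑ i, w i ≤ ∑ _i : Fin n, (1 : ℝ) :=
      Finset.sum_le_sum fun i _ => (hw i).2
    simp only [Finset.sum_const, Finset.card_univ, Fintype.card_fin, nsmul_eq_mul,
      mul_one] at h1
    linarith
  have hne : S.Nonempty := by
    refine ⟨(n : ℝ), 0, 0, fun i => ⟨le_refl 0, zero_le_one⟩, rfl, ?_, by simp⟩
    intro β'
    simp
  constructor
  · -- sns ≤ n - k → ∃ lam
    intro h
    by_contra hcon
    push_neg at hcon
    have hlb : ∀ s ∈ S, (n : ℝ) - k + 1 ≤ s := by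
      rintro s ⟨w, β, hw, hβ0, hmin, rfl⟩
      set lam : Fin d → ℝ := fun j => β j.succ with hlam
      -- the objective at β is 0
      have hzero : ∑ i, w i * (X.mulVec β i - c i) ^ 2 = 0 := by
        refine le_antisymm ?_ (Finset.sum_nonneg fun i _ =>
          mul_nonneg (hw i).1 (sq_nonneg _))
        have := hmin (Fin.cons 1 0)
        simpa [he1] using this
      have hterm : ∀ i ∈ Finset.univ, w i * (X.mulVec β i - c i) ^ 2 = 0 :=
        (Finset.sum_eq_zero_iff_of_nonneg fun i _ =>
          mul_nonneg (hw i).1 (sq_nonneg _)).1 hzero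
      have hsupp : ∀ i, w i ≠ 0 → ∑ j, v i j * lam j = c i := by
        intro i hwi
        have h0 := hterm i (Finset.mem_univ i)
        have h1 : (X.mulVec β i - c i) ^ 2 = 0 := by
          rcases mul_eq_zero.1 h0 with h | h
          · exact absurd h hwi
          · exact h
        have h2 : X.mulVec β i = c i := by
          have := pow_eq_zero_iff (n := 2) (by norm_num) |>.1 h1
          linarith
        rw [sns_mv, hβ0] at h2
        simpa [hlam] using h2
      set T := Finset.univ.filter (fun i => (∑ j, v i j * lam j) = c i) with hT
      have hsum : ∑ i, w i ≤ (T.card : ℝ) := by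
        have h1 : ∑ i, w i = ∑ i ∈ T, w i := by
          refine (Finset.sum_subset (Finset.subset_univ T) ?_).symm
          intro i _ hi
          by_contra hwi
          exact hi (Finset.mem_filter.2 ⟨Finset.mem_univ i, hsupp i hwi⟩)
        rw [h1]
        calc ∑ i ∈ T, w i ≤ ∑ _i ∈ T, (1 : ℝ) :=
              Finset.sum_le_sum fun i _ => (hw i).2
          _ = T.card := by simp
      have hcard : T.card + 1 ≤ k := hcon lam
      have hcard' : (T.card : ℝ) + 1 ≤ (k : ℝ) := by exact_mod_cast hcard
      linarith
    have := le_csInf hne hlb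
    rw [hsns] at h
    linarith
  · -- ∃ lam → sns ≤ n - k
    rintro ⟨lam, hlam⟩
    set T := Finset.univ.filter (fun i => (∑ j, v i j * lam j) = c i) with hT
    have hmem : (n : ℝ) - T.card ∈ S := by
      refine ⟨fun i => if (∑ j, v i j * lam j) = c i then 1 else 0,
        Fin.cons 0 lam, ?_, by simp, ?_, ?_⟩
      · intro i
        dsimp only
        split <;> norm_num
      · intro β'
        have hzero : ∑ i, (if (∑ j, v i j * lam j) = c i then (1:ℝ) else 0) *
            (X.mulVec (Fin.cons 0 lam) i - c i) ^ 2 = 0 := by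
          refine Finset.sum_eq_zero fun i _ => ?_
          by_cases hi : (∑ j, v i j * lam j) = c i
          · have : X.mulVec (Fin.cons 0 lam) i = c i := by
              rw [sns_mv]
              simpa using hi
            simp [this]
          · simp [hi]
        rw [hzero]
        refine Finset.sum_nonneg fun i _ => mul_nonneg ?_ (sq_nonneg _)
        dsimp only
        split <;> norm_num
      · congr 1
        dsimp only
        rw [Finset.sum_boole, hT]
    rw [hsns]
    refine le_trans (csInf_le hbdd hmem) ?_
    have : (k : ℝ) ≤ (T.card : ℝ) := by exact_mod_cast hlam
    linarith
end
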